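/- Let D₁,...,Dₙ > 0 and consider two out-of-observation terms 0 ≤ M₁ < M₂, both satisfying Σⱼ 1/Dⱼ + Mᵢ > 1. Let η*ᵢ ∈ (0,1) denote the unique root of 1/η - Σⱼ 1/(1+Dⱼ-η) - Mᵢ = 0. Then η*₂ < η*₁, i.e., the optimal channel access probability is strictly decreasing in the unobserved interference level M. -/
import Mathlib


/-- The optimal access probability is strictly decreasing in the
unobserved interference level: if `0 ≤ M₁ < M₂` both satisfy `∑ j 1/D j + Mᵢ > 1`
and `ηᵢ ∈ (0,1)` are the respective roots of `1/η - ∑ j 1/(1+D j-η) - Mᵢ = 0`,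
then `η₂ < η₁`. -/
theorem root_strictly_decreasing_in_M (n : ℕ) (D : Fin n → ℝ) (M₁ M₂ : ℝ)
    (hD : ∀ j, 0 < D j) (hM1 : 0 ≤ M₁) (hM12 : M₁ < M₂)
    (hcond1 : 1 < (∑ j, 1 / D j) + M₁) (hcond2 : 1 < (∑ j, 1 / D j) + M₂)
    (η₁ η₂ : ℝ) (hmem1 : η₁ ∈ Set.Ioo (0:ℝ) 1) (hmem2 : η₂ ∈ Set.Ioo (0:ℝ) 1)
    (hroot1 : 1 / η₁ - (∑ j, 1 / (1 + D j - η₁)) - M₁ = 0)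
    (hroot2 : 1 / η₂ - (∑ j, 1 / (1 + D j - η₂)) - M₂ = 0) :
    η₂ < η₁ := by
  by_contra h
  push_neg at h
  obtain ⟨h1pos, h1lt⟩ := hmem1
  obtain ⟨h2pos, h2lt⟩ := hmem2
  have hinv : 1 / η₂ ≤ 1 / η₁ := one_div_le_one_div_of_le h1pos h
  have hsum : (∑ j, 1 / (1 + D j - η₁)) ≤ ∑ j, 1 / (1 + D j - η₂) := by
    apply Finset.sum_le_sum
    intro j _
    apply one_div_le_one_div_of_le
    · linarith [hD j]
    · linarith
  linarith
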